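/- For every integer n ≥ 1 and every pattern pair p ∈ {(000,011), (001,101), (001,102), (001,201), (010,012), (011,012)}, the number of inversion sequences of length n avoiding both patterns of p equals 2^{n−1}, i.e. |I_n(p)| = 2^{n−1}. -/

import Mathlib

/-- An inversion sequence of length `n` (0-indexed): `e i ≤ i` for all `i`. -/
def InvSeq {n : ℕ} (e : Fin n → ℕ) : Prop := ∀ i : Fin n, e i ≤ (i : ℕ)

/-- `e` contains the pattern `p` (a word of nonnegative integers): there is a
strictly increasing choice of positions on which `e` is order-isomorphic to `p`. -/
def Contains {n : ℕ} (e : Fin n → ℕ) (p : List ℕ) : Prop :=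
  ∃ s : Fin p.length → Fin n, StrictMono s ∧
    ∀ a b : Fin p.length,
      (p.get a < p.get b ↔ e (s a) < e (s b)) ∧
      (p.get a = p.get b ↔ e (s a) = e (s b))

/-- `e` avoids the pattern `p`. -/
def Avoids {n : ℕ} (e : Fin n → ℕ) (p : List ℕ) : Prop := ¬ Contains e p

/-- The number of zero entries of `e`. -/
def zeroStat {n : ℕ} (e : Fin n → ℕ) : ℕ :=
  (Finset.univ.filter (fun i : Fin n => e i = 0)).card

/-- The number of distinct positive values among the entries of `e`. -/
def distStat {n : ℕ} (e : Fin n → ℕ) : ℕ :=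
  ((Finset.univ.image e).filter (fun v => 0 < v)).card

/-- The number of repeated entries of `e`: `n - dist e`. -/
def repStat {n : ℕ} (e : Fin n → ℕ) : ℕ := n - distStat e

/-- The number of saturated entries of `e` (1-indexed: `e_i = i - 1`). -/
def satuStat {n : ℕ} (e : Fin n → ℕ) : ℕ :=
  (Finset.univ.filter (fun i : Fin n => e i = (i : ℕ))).card

open Finset

attribute [local instance] Classical.propDecidable

variable {n : ℕ} {m : ℕ}

theorem contains_triple_iff (e : Fin n → ℕ) (x y z : ℕ) :
    Contains e [x, y, z] ↔ ∃ i j k : Fin n, i < j ∧ j < k ∧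
      ((x < y ↔ e i < e j) ∧ (y < x ↔ e j < e i) ∧ (x = y ↔ e i = e j)) ∧
      ((x < z ↔ e i < e k) ∧ (z < x ↔ e k < e i) ∧ (x = z ↔ e i = e k)) ∧
      ((y < z ↔ e j < e k) ∧ (z < y ↔ e k < e j) ∧ (y = z ↔ e j = e k)) := by
  have l3 : [x,y,z].length = 3 := rfl
  constructor
  · rintro ⟨s, hs, h⟩
    refine ⟨s ⟨0, by omega⟩, s ⟨1, by omega⟩, s ⟨2, by omega⟩,
      hs (by simp [Fin.mk_lt_mk]), hs (by simp [Fin.mk_lt_mk]),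
      ⟨(h ⟨0, by omega⟩ ⟨1, by omega⟩).1, (h ⟨1, by omega⟩ ⟨0, by omega⟩).1,
        (h ⟨0, by omega⟩ ⟨1, by omega⟩).2⟩,
      ⟨(h ⟨0, by omega⟩ ⟨2, by omega⟩).1, (h ⟨2, by omega⟩ ⟨0, by omega⟩).1,
        (h ⟨0, by omega⟩ ⟨2, by omega⟩).2⟩,
      ⟨(h ⟨1, by omega⟩ ⟨2, by omega⟩).1, (h ⟨2, by omega⟩ ⟨1, by omega⟩).1,
        (h ⟨1, by omega⟩ ⟨2, by omega⟩).2⟩⟩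
  · rintro ⟨i, j, k, hij, hjk, h1, h2, h3⟩
    refine ⟨fun a => if (a : ℕ) = 0 then i else if (a : ℕ) = 1 then j else k, ?_, ?_⟩
    · rintro ⟨av, ha⟩ ⟨bv, hb⟩ hab
      rw [Fin.mk_lt_mk] at hab
      rw [l3] at ha hb
      interval_cases av <;> interval_cases bv <;> simp_all <;>
        first | exact hij | exact hjk | exact hij.trans hjk
    · rintro ⟨av, ha⟩ ⟨bv, hb⟩
      rw [l3] at ha hb
      interval_cases av <;> interval_cases bv <;>
        refine ⟨?_, ?_⟩ <;>
        first
        | exact Iff.rfl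
        | exact h1.1 | exact h1.2.1 | exact h1.2.2
        | exact h2.1 | exact h2.2.1 | exact h2.2.2
        | exact h3.1 | exact h3.2.1 | exact h3.2.2
        | (constructor <;> intro <;> omega)
        | exact ⟨fun h' => (h1.2.2.mp h'.symm).symm, fun h' => (h1.2.2.mpr h'.symm).symm⟩
        | exact ⟨fun h' => (h2.2.2.mp h'.symm).symm, fun h' => (h2.2.2.mpr h'.symm).symm⟩
        | exact ⟨fun h' => (h3.2.2.mp h'.symm).symm, fun h' => (h3.2.2.mpr h'.symm).symm⟩

theorem contains_000 (e : Fin n → ℕ) :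
    Contains e [0,0,0] ↔ ∃ i j k : Fin n, i < j ∧ j < k ∧ e i = e j ∧ e j = e k := by
  rw [contains_triple_iff]
  constructor <;> rintro ⟨i,j,k,hij,hjk,h⟩ <;> exact ⟨i,j,k,hij,hjk, by omega⟩

theorem contains_011 (e : Fin n → ℕ) :
    Contains e [0,1,1] ↔ ∃ i j k : Fin n, i < j ∧ j < k ∧ e i < e j ∧ e j = e k := by
  rw [contains_triple_iff]
  constructor <;> rintro ⟨i,j,k,hij,hjk,h⟩ <;> exact ⟨i,j,k,hij,hjk, by omega⟩

theorem contains_001 (e : Fin n → ℕ) :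
    Contains e [0,0,1] ↔ ∃ i j k : Fin n, i < j ∧ j < k ∧ e i = e j ∧ e j < e k := by
  rw [contains_triple_iff]
  constructor <;> rintro ⟨i,j,k,hij,hjk,h⟩ <;> exact ⟨i,j,k,hij,hjk, by omega⟩

theorem contains_101 (e : Fin n → ℕ) :
    Contains e [1,0,1] ↔ ∃ i j k : Fin n, i < j ∧ j < k ∧ e j < e i ∧ e i = e k := by
  rw [contains_triple_iff]
  constructor <;> rintro ⟨i,j,k,hij,hjk,h⟩ <;> exact ⟨i,j,k,hij,hjk, by omega⟩

theorem contains_102 (e : Fin n → ℕ) :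
    Contains e [1,0,2] ↔ ∃ i j k : Fin n, i < j ∧ j < k ∧ e j < e i ∧ e i < e k := by
  rw [contains_triple_iff]
  constructor <;> rintro ⟨i,j,k,hij,hjk,h⟩ <;> exact ⟨i,j,k,hij,hjk, by omega⟩

theorem contains_201 (e : Fin n → ℕ) :
    Contains e [2,0,1] ↔ ∃ i j k : Fin n, i < j ∧ j < k ∧ e j < e k ∧ e k < e i := by
  rw [contains_triple_iff]
  constructor <;> rintro ⟨i,j,k,hij,hjk,h⟩ <;> exact ⟨i,j,k,hij,hjk, by omega⟩

theorem contains_010 (e : Fin n → ℕ) :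
    Contains e [0,1,0] ↔ ∃ i j k : Fin n, i < j ∧ j < k ∧ e i < e j ∧ e i = e k := by
  rw [contains_triple_iff]
  constructor <;> rintro ⟨i,j,k,hij,hjk,h⟩ <;> exact ⟨i,j,k,hij,hjk, by omega⟩

theorem contains_012 (e : Fin n → ℕ) :
    Contains e [0,1,2] ↔ ∃ i j k : Fin n, i < j ∧ j < k ∧ e i < e j ∧ e j < e k := by
  rw [contains_triple_iff]
  constructor <;> rintro ⟨i,j,k,hij,hjk,h⟩ <;> exact ⟨i,j,k,hij,hjk, by omega⟩

/-- staircase then weakly decreasing, local form -/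
def LocalD {m : ℕ} (e : Fin m → ℕ) : Prop :=
  ∀ i j : Fin m, (i:ℕ)+1 = (j:ℕ) → (e j ≤ e i ∨ (e i = (i:ℕ) ∧ e j = (j:ℕ)))

def PEprop {m : ℕ} (e : Fin m → ℕ) : Prop :=
  ∀ i j : Fin m, (i:ℕ)+1 = (j:ℕ) → 0 < e i → (0 < e j ∧ e j ≤ e i)

def PFprop {m : ℕ} (e : Fin m → ℕ) : Prop :=
  ∀ i j : Fin m, i < j → 0 < e i → 0 < e j → e j < e i

def PAprop {m : ℕ} (e : Fin m → ℕ) : Prop :=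
  (∀ i j : Fin m, i < j → e i = e j → e i = 0) ∧
  (Finset.univ.filter (fun i : Fin m => e i = 0)).card ≤ 2

section Dlemmas
variable {e : Fin m → ℕ}

theorem kd1 (hD : LocalD e) (hI : InvSeq e) :
    ∀ j : Fin m, e j = (j:ℕ) → ∀ i : Fin m, (i:ℕ) ≤ (j:ℕ) → e i = (i:ℕ) := by
  suffices h : ∀ d : ℕ, ∀ j : Fin m, e j = (j:ℕ) → ∀ i : Fin m, (i:ℕ) + d = (j:ℕ) → e i = (i:ℕ) by
    intro j hj i hij; exact h ((j:ℕ) - (i:ℕ)) j hj i (by omega)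
  intro d
  induction d with
  | zero => intro j hj i hij; have : i = j := Fin.ext (by omega); rw [this]; exact hj
  | succ d IH =>
    intro j hj i hij
    have hi1 : (i:ℕ) + 1 < m := by have := j.isLt; omega
    set i1 : Fin m := ⟨(i:ℕ)+1, hi1⟩ with hi1def
    have h1 : e i1 = (i:ℕ)+1 := IH j hj i1 (by simp [hi1def]; omega)
    rcases hD i i1 (by simp [hi1def]) with h | h
    · have := hI i; omega
    · exact h.1

theorem kd2 (hD : LocalD e) (hI : InvSeq e) :
    ∀ i j : Fin m, i < j → (e j ≤ e i ∨ e i = (i:ℕ)) := by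
  suffices h : ∀ d : ℕ, ∀ i j : Fin m, (i:ℕ) + 1 + d = (j:ℕ) → (e j ≤ e i ∨ e i = (i:ℕ)) by
    intro i j hij; exact h ((j:ℕ) - (i:ℕ) - 1) i j (by rw [Fin.lt_def] at hij; omega)
  intro d
  induction d with
  | zero =>
    intro i j hij
    rcases hD i j (by omega) with h | h
    · exact Or.inl h
    · exact Or.inr h.1
  | succ d IH =>
    intro i j hij
    have hj0 : (j:ℕ) - 1 < m := by have := j.isLt; omega
    set j0 : Fin m := ⟨(j:ℕ)-1, hj0⟩ with hj0def
    rcases hD j0 j (by simp [hj0def]; omega) with h | h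
    · rcases IH i j0 (by simp [hj0def]; omega) with h' | h'
      · exact Or.inl (h.trans h')
      · exact Or.inr h'
    · exact Or.inr (kd1 hD hI j0 h.1 i (by simp [hj0def]; omega))

theorem localD_avoids_001 (hD : LocalD e) (hI : InvSeq e) : Avoids e [0,0,1] := by
  rw [Avoids, contains_001]
  rintro ⟨i,j,k,hij,hjk,h1,h2⟩
  rcases kd2 hD hI j k hjk with h | h
  · omega
  · have := kd1 hD hI j h i (le_of_lt (Fin.lt_def.mp hij))
    rw [Fin.lt_def] at hij; omega

theorem localD_avoids_101 (hD : LocalD e) (hI : InvSeq e) : Avoids e [1,0,1] := by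
  rw [Avoids, contains_101]
  rintro ⟨i,j,k,hij,hjk,h1,h2⟩
  rcases kd2 hD hI j k hjk with h | h
  · omega
  · have := kd1 hD hI j h i (le_of_lt (Fin.lt_def.mp hij))
    rw [Fin.lt_def] at hij; omega

theorem localD_avoids_102 (hD : LocalD e) (hI : InvSeq e) : Avoids e [1,0,2] := by
  rw [Avoids, contains_102]
  rintro ⟨i,j,k,hij,hjk,h1,h2⟩
  rcases kd2 hD hI j k hjk with h | h
  · omega
  · have := kd1 hD hI j h i (le_of_lt (Fin.lt_def.mp hij))
    rw [Fin.lt_def] at hij; omega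

theorem localD_avoids_201 (hD : LocalD e) (hI : InvSeq e) : Avoids e [2,0,1] := by
  rw [Avoids, contains_201]
  rintro ⟨i,j,k,hij,hjk,h1,h2⟩
  rcases kd2 hD hI j k hjk with h | h
  · omega
  · have hii := kd1 hD hI j h i (le_of_lt (Fin.lt_def.mp hij))
    have := hI i; rw [Fin.lt_def] at hij; omega

theorem localD_of_avoids_001 (hI : InvSeq e) (hA : Avoids e [0,0,1]) : LocalD e := by
  rw [Avoids, contains_001] at hA
  intro i j hij
  by_cases hle : e j ≤ e i
  · exact Or.inl hle
  push_neg at hle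
  -- rise at (i,j): show full staircase up to i
  have C : ∀ sv : ℕ, ∀ hs : sv < m, sv ≤ (i:ℕ) → e ⟨sv, hs⟩ = sv := by
    intro sv
    induction sv using Nat.strong_induction_on with
    | _ sv IH =>
      intro hs hsi
      by_contra hne
      have hlt : e ⟨sv, hs⟩ < sv := lt_of_le_of_ne (hI ⟨sv, hs⟩) hne
      have hsv1 : 1 ≤ sv := by omega
      have hs0 : sv - 1 < m := by omega
      have hprev : e ⟨sv-1, hs0⟩ = sv - 1 := IH (sv-1) (by omega) hs0 (by omega)
      -- helper: find an equal pair (a,b) with a<b≤i-ish and value < something, then use j as riser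
      by_cases hcase : e ⟨sv, hs⟩ = sv - 1
      · -- equal pair (sv-1, sv)
        by_cases hj : sv - 1 < e j
        · exact hA ⟨⟨sv-1, hs0⟩, ⟨sv, hs⟩, j, by rw [Fin.lt_def]; simp; omega,
            by rw [Fin.lt_def]; simp; omega, by omega, by omega⟩
        · -- e j ≤ sv - 1, so w := e i < e j ≤ sv-1
          have hw : e i < sv - 1 := by omega
          have hwlt : e i < m := by have := i.isLt; omega
          have hweq : e ⟨e i, hwlt⟩ = e i := IH (e i) (by omega) hwlt (by omega)
          exact hA ⟨⟨e i, hwlt⟩, i, j, by rw [Fin.lt_def]; simp; omega, by rw [Fin.lt_def]; omega, by omega, by omega⟩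
      · -- v := e sv < sv - 1
        have hv : e ⟨sv, hs⟩ < sv - 1 := by omega
        have hvlt : e ⟨sv, hs⟩ < m := by omega
        have hveq : e ⟨e ⟨sv, hs⟩, hvlt⟩ = e ⟨sv, hs⟩ := IH _ (by omega) hvlt (by omega)
        by_cases hj : e ⟨sv, hs⟩ < e j
        · exact hA ⟨⟨e ⟨sv, hs⟩, hvlt⟩, ⟨sv, hs⟩, j, by rw [Fin.lt_def]; simp; omega,
            by rw [Fin.lt_def]; simp; omega, by omega, by omega⟩
        · have hw : e i < e ⟨sv, hs⟩ := by omega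
          have hwlt : e i < m := by omega
          have hweq : e ⟨e i, hwlt⟩ = e i := IH (e i) (by omega) hwlt (by omega)
          exact hA ⟨⟨e i, hwlt⟩, i, j, by rw [Fin.lt_def]; simp; omega, by rw [Fin.lt_def]; omega, by omega, by omega⟩
  have hei : e i = (i:ℕ) := C i i.isLt le_rfl
  have hej : e j = (j:ℕ) := by have := hI j; omega
  exact Or.inr ⟨hei, hej⟩

end Dlemmas

section EFA
variable {e : Fin m → ℕ}

theorem ke (hE : PEprop e) :
    ∀ i j : Fin m, (i:ℕ) ≤ (j:ℕ) → 0 < e i → (0 < e j ∧ e j ≤ e i) := by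
  suffices h : ∀ d : ℕ, ∀ i j : Fin m, (i:ℕ) + d = (j:ℕ) → 0 < e i → (0 < e j ∧ e j ≤ e i) by
    intro i j hij; exact h ((j:ℕ) - (i:ℕ)) i j (by omega)
  intro d
  induction d with
  | zero => intro i j hij hp; have : i = j := Fin.ext (by omega); rw [← this]; exact ⟨hp, le_rfl⟩
  | succ d IH =>
    intro i j hij hp
    have hj0 : (j:ℕ) - 1 < m := by have := j.isLt; omega
    set j0 : Fin m := ⟨(j:ℕ)-1, hj0⟩ with hj0def
    obtain ⟨h1, h2⟩ := IH i j0 (by simp [hj0def]; omega) hp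
    obtain ⟨h3, h4⟩ := hE j0 j (by simp [hj0def]; omega) h1
    exact ⟨h3, h4.trans h2⟩

theorem pe_avoids_010 (hE : PEprop e) : Avoids e [0,1,0] := by
  rw [Avoids, contains_010]
  rintro ⟨i,j,k,hij,hjk,h1,h2⟩
  have hj : 0 < e j := by omega
  obtain ⟨hk, _⟩ := ke hE j k (le_of_lt (Fin.lt_def.mp hjk)) hj
  have hi : 0 < e i := by omega
  obtain ⟨_, h⟩ := ke hE i j (le_of_lt (Fin.lt_def.mp hij)) hi
  omega

theorem pe_avoids_012 (hE : PEprop e) : Avoids e [0,1,2] := by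
  rw [Avoids, contains_012]
  rintro ⟨i,j,k,hij,hjk,h1,h2⟩
  have hj : 0 < e j := by omega
  obtain ⟨_, h⟩ := ke hE j k (le_of_lt (Fin.lt_def.mp hjk)) hj
  omega

theorem pe_of_avoids (hI : InvSeq e) (h010 : Avoids e [0,1,0]) (h012 : Avoids e [0,1,2]) :
    PEprop e := by
  rw [Avoids, contains_010] at h010
  rw [Avoids, contains_012] at h012
  intro i j hij hp
  have hi1 : 1 ≤ (i:ℕ) := by have := hI i; omega
  have h0m : 0 < m := by have := i.isLt; omega
  have hz0 : e ⟨0, h0m⟩ = 0 := by have := hI ⟨0, h0m⟩; simpa using this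
  have hzi : (⟨0, h0m⟩ : Fin m) < i := by rw [Fin.lt_def]; exact hi1
  constructor
  · by_contra hej
    exact h010 ⟨⟨0, h0m⟩, i, j, hzi, by rw [Fin.lt_def]; omega, by omega, by omega⟩
  · by_contra hej
    exact h012 ⟨⟨0, h0m⟩, i, j, hzi, by rw [Fin.lt_def]; omega, by omega, by omega⟩

theorem pf_avoids_011 (hF : PFprop e) : Avoids e [0,1,1] := by
  rw [Avoids, contains_011]
  rintro ⟨i,j,k,hij,hjk,h1,h2⟩
  have := hF j k hjk (by omega) (by omega)
  omega

theorem pf_avoids_012 (hF : PFprop e) : Avoids e [0,1,2] := by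
  rw [Avoids, contains_012]
  rintro ⟨i,j,k,hij,hjk,h1,h2⟩
  have := hF j k hjk (by omega) (by omega)
  omega

theorem pf_of_avoids (hI : InvSeq e) (h011 : Avoids e [0,1,1]) (h012 : Avoids e [0,1,2]) :
    PFprop e := by
  rw [Avoids, contains_011] at h011
  rw [Avoids, contains_012] at h012
  intro i j hij hpi hpj
  by_contra hge
  have hi1 : 1 ≤ (i:ℕ) := by have := hI i; omega
  have h0m : 0 < m := by have := i.isLt; omega
  have hz0 : e ⟨0, h0m⟩ = 0 := by have := hI ⟨0, h0m⟩; simpa using this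
  have hzi : (⟨0, h0m⟩ : Fin m) < i := by rw [Fin.lt_def]; exact hi1
  by_cases heq : e i = e j
  · exact h011 ⟨⟨0, h0m⟩, i, j, hzi, hij, by omega, heq⟩
  · exact h012 ⟨⟨0, h0m⟩, i, j, hzi, hij, by omega, by omega⟩

theorem pa_avoids_000 (hA : PAprop e) : Avoids e [0,0,0] := by
  rw [Avoids, contains_000]
  rintro ⟨i,j,k,hij,hjk,h1,h2⟩
  by_cases hz : e i = 0
  · have hij' : i ≠ j := ne_of_lt hij
    have hjk' : j ≠ k := ne_of_lt hjk
    have hik' : i ≠ k := ne_of_lt (hij.trans hjk)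
    have hcard : ({i, j, k} : Finset (Fin m)).card ≤ 2 := by
      refine le_trans (Finset.card_le_card ?_) hA.2
      intro a ha
      simp only [Finset.mem_insert, Finset.mem_singleton] at ha
      simp only [Finset.mem_filter, Finset.mem_univ, true_and]
      rcases ha with rfl | rfl | rfl <;> omega
    rw [Finset.card_insert_of_notMem (by simp [hij', hik']),
      Finset.card_insert_of_notMem (by simp [hjk']), Finset.card_singleton] at hcard
    omega
  · exact hz (hA.1 i j hij h1)

theorem pa_avoids_011 (hA : PAprop e) : Avoids e [0,1,1] := by
  rw [Avoids, contains_011]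
  rintro ⟨i,j,k,hij,hjk,h1,h2⟩
  have := hA.1 j k hjk h2
  omega

theorem pa_of_avoids (hI : InvSeq e) (h000 : Avoids e [0,0,0]) (h011 : Avoids e [0,1,1]) :
    PAprop e := by
  rw [Avoids, contains_000] at h000
  rw [Avoids, contains_011] at h011
  constructor
  · intro i j hij heq
    by_contra hne
    have hi1 : 1 ≤ (i:ℕ) := by have := hI i; omega
    have h0m : 0 < m := by have := i.isLt; omega
    have hz0 : e ⟨0, h0m⟩ = 0 := by have := hI ⟨0, h0m⟩; simpa using this
    exact h011 ⟨⟨0, h0m⟩, i, j, by rw [Fin.lt_def]; exact hi1, hij, by omega, heq⟩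
  · by_contra hc
    push_neg at hc
    obtain ⟨a, b, c, ha, hb, hc', hab, hac, hbc⟩ := Finset.two_lt_card_iff.mp hc
    simp only [Finset.mem_filter, Finset.mem_univ, true_and] at ha hb hc'
    rcases lt_trichotomy a b with h1 | h1 | h1 <;>
    rcases lt_trichotomy b c with h2 | h2 | h2 <;>
    rcases lt_trichotomy a c with h3 | h3 | h3 <;>
      first
      | exact absurd h1 hab
      | exact absurd h2 hbc
      | exact absurd h3 hac
      | exact h000 ⟨a, b, c, h1, h2, by omega, by omega⟩
      | exact h000 ⟨a, c, b, h3, by omega, by omega, by omega⟩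
      | exact h000 ⟨b, a, c, h1, h3, by omega, by omega⟩
      | exact h000 ⟨b, c, a, h2, by omega, by omega, by omega⟩
      | exact h000 ⟨c, a, b, by omega, h1, by omega, by omega⟩
      | exact h000 ⟨c, b, a, by omega, by omega, by omega, by omega⟩

end EFA

noncomputable def Iseq (m : ℕ) : Finset (Fin m → ℕ) :=
  Fintype.piFinset fun i => Finset.range ((i:ℕ)+1)

theorem mem_Iseq {m : ℕ} {e : Fin m → ℕ} : e ∈ Iseq m ↔ InvSeq e := by
  simp [Iseq, Fintype.mem_piFinset, InvSeq, Nat.lt_succ_iff]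

theorem invSeq_snoc {m : ℕ} (e' : Fin m → ℕ) (x : ℕ) :
    InvSeq (Fin.snoc e' x : Fin (m+1) → ℕ) ↔ InvSeq e' ∧ x ≤ m := by
  constructor
  · intro h
    refine ⟨fun i => ?_, ?_⟩
    · have := h i.castSucc
      simpa [Fin.snoc_castSucc] using this
    · have := h (Fin.last m)
      simpa [Fin.snoc_last] using this
  · rintro ⟨h1, h2⟩ i
    cases i using Fin.lastCases with
    | last => simpa [Fin.snoc_last] using h2
    | cast i' => simpa [Fin.snoc_castSucc] using h1 i'

theorem invSeq_init {m : ℕ} {e : Fin (m+1) → ℕ} (h : InvSeq e) : InvSeq (Fin.init e) := by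
  intro i
  have := h i.castSucc
  simpa [Fin.init] using this

/-- bijection: sequences in `S` are exactly snocs of sequences in `T` by the fixed value `v`. -/
theorem card_eq_of_snoc {m : ℕ} (S : Finset (Fin (m+1) → ℕ)) (T : Finset (Fin m → ℕ))
    (v : ℕ) (h : ∀ e : Fin (m+1) → ℕ, e ∈ S ↔ (Fin.init e ∈ T ∧ e (Fin.last m) = v)) :
    S.card = T.card := by
  apply Finset.card_bij (fun e _ => Fin.init e)
  · intro e he; exact ((h e).mp he).1
  · intro e1 h1 e2 h2 heq
    have l1 := ((h e1).mp h1).2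
    have l2 := ((h e2).mp h2).2
    rw [← Fin.snoc_init_self e1, ← Fin.snoc_init_self e2, heq, l1, l2]
  · intro e' he'
    refine ⟨Fin.snoc e' v, ?_, ?_⟩
    · rw [h]
      constructor
      · rw [Fin.init_snoc]; exact he'
      · rw [Fin.snoc_last]
    · rw [Fin.init_snoc]

/-- fiberwise: card of `S` as a sum over `T` of allowed extension counts. -/
theorem card_eq_sum_snoc {m : ℕ} (S : Finset (Fin (m+1) → ℕ)) (T : Finset (Fin m → ℕ))
    (A : (Fin m → ℕ) → Finset ℕ)
    (h : ∀ e : Fin (m+1) → ℕ, e ∈ S ↔ (Fin.init e ∈ T ∧ e (Fin.last m) ∈ A (Fin.init e))) :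
    S.card = ∑ e' ∈ T, (A e').card := by
  rw [Finset.card_eq_sum_card_fiberwise (f := fun e => Fin.init e) (t := T)
    (fun e he => ((h e).mp he).1)]
  refine Finset.sum_congr rfl fun e' he' => ?_
  apply Finset.card_bij (fun e _ => e (Fin.last m))
  · intro e he
    simp only [Finset.mem_filter] at he
    have := ((h e).mp he.1).2
    rwa [he.2] at this
  · intro e1 h1 e2 h2 heq
    simp only [Finset.mem_filter] at h1 h2
    rw [← Fin.snoc_init_self e1, ← Fin.snoc_init_self e2, heq, h1.2, h2.2]
  · intro x hx
    refine ⟨Fin.snoc e' x, ?_, ?_⟩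
    · simp only [Finset.mem_filter]
      refine ⟨(h _).mpr ⟨?_, ?_⟩, ?_⟩ <;> rw [Fin.init_snoc] <;>
        first | exact he' | (rw [Fin.snoc_last]; exact hx) | rfl
    · rw [Fin.snoc_last]

theorem card_filter_le_eq_sum {α : Type*} (S : Finset α) (f : α → ℕ) (M v : ℕ)
    (hb : ∀ e ∈ S, f e ≤ M) :
    (S.filter (fun e => v ≤ f e)).card = ∑ u ∈ Finset.Icc v M, (S.filter (fun e => f e = u)).card := by
  rw [Finset.card_eq_sum_card_fiberwise (f := f) (t := Finset.Icc v M)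
    (fun e he => by simp only [Finset.mem_coe, Finset.mem_filter] at he; simp [Finset.mem_Icc, he.2, hb e he.1])]
  refine Finset.sum_congr rfl fun u hu => ?_
  congr 1
  ext e
  simp only [Finset.mem_filter, Finset.mem_Icc] at hu ⊢
  constructor
  · rintro ⟨⟨h1, h2⟩, h3⟩; exact ⟨h1, h3⟩
  · rintro ⟨h1, h2⟩; exact ⟨⟨h1, by omega⟩, h2⟩

theorem geo1 : ∀ k v : ℕ, (∑ u ∈ Finset.Icc v (v+k), 2^(v+k-u)) = 2^(k+1) - 1 := by
  intro k
  induction k with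
  | zero => intro v; simp
  | succ k IH =>
    intro v
    rw [show v + (k+1) = (v+k) + 1 from rfl, Finset.sum_Icc_succ_top (by omega)]
    have h1 : ∑ u ∈ Finset.Icc v (v+k), 2^(v+k+1-u) = 2 * ∑ u ∈ Finset.Icc v (v+k), 2^(v+k-u) := by
      rw [Finset.mul_sum]
      refine Finset.sum_congr rfl fun u hu => ?_
      simp only [Finset.mem_Icc] at hu
      rw [show v+k+1-u = (v+k-u)+1 by omega, pow_succ]
      ring
    rw [h1, IH, show v+k+1-(v+k+1) = 0 by omega]
    have h2 : 1 ≤ 2^(k+1) := Nat.one_le_two_pow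
    have h3 : (2:ℕ)^(k+1+1) = 2 * 2^(k+1) := by rw [pow_succ]; ring
    omega

theorem geo1' (v M : ℕ) :
    (∑ u ∈ Finset.Icc v M, 2^(M-u)) = 2^(M+1-v) - 1 := by
  rcases Nat.lt_or_ge M v with h' | h'
  · rw [Finset.Icc_eq_empty (by omega), show M + 1 - v = 0 by omega]
    simp
  · have h := geo1 (M - v) v
    rw [show v + (M - v) = M by omega] at h
    rw [h, show M + 1 - v = M - v + 1 by omega]

theorem sumD (k v : ℕ) :
    (∑ u ∈ Finset.Icc v (v+k), (if u = v+k then 1 else if u < v+k then 2^(v+k-1-u) else 0)) = 2^k := by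
  cases k with
  | zero => simp
  | succ k =>
    rw [show v + (k+1) = (v+k) + 1 from rfl, Finset.sum_Icc_succ_top (by omega)]
    rw [if_pos rfl]
    have h1 : (∑ u ∈ Finset.Icc v (v+k), (if u = v+k+1 then 1 else if u < v+k+1 then 2^(v+k+1-1-u) else 0))
        = ∑ u ∈ Finset.Icc v (v+k), 2^(v+k-u) := by
      refine Finset.sum_congr rfl fun u hu => ?_
      simp only [Finset.mem_Icc] at hu
      rw [if_neg (by omega), if_pos (by omega), show v+k+1-1-u = v+k-u by omega]
    rw [h1, geo1 k v]
    have h2 : 1 ≤ 2^(k+1) := Nat.one_le_two_pow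
    omega


theorem localD_snoc {m : ℕ} (e' : Fin (m+1) → ℕ) (x : ℕ) :
    LocalD (Fin.snoc e' x : Fin (m+2) → ℕ) ↔
      LocalD e' ∧ (x ≤ e' (Fin.last m) ∨ (e' (Fin.last m) = m ∧ x = m+1)) := by
  constructor
  · intro H
    constructor
    · intro i j hadj
      have h := H i.castSucc j.castSucc (by simpa using hadj)
      simpa [Fin.snoc_castSucc] using h
    · have h := H (Fin.last m).castSucc (Fin.last (m+1)) (by simp)
      simpa [Fin.snoc_castSucc, Fin.snoc_last] using h
  · rintro ⟨H1, H2⟩ i j hadj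
    cases j using Fin.lastCases with
    | last =>
      have hi : i = (Fin.last m).castSucc := Fin.ext (by simp at hadj ⊢; omega)
      subst hi
      simpa [Fin.snoc_castSucc, Fin.snoc_last] using H2
    | cast j' =>
      have hilt : (i:ℕ) < m + 1 := by simp at hadj; have := j'.isLt; omega
      have hi : i = Fin.castSucc ⟨(i:ℕ), hilt⟩ := Fin.ext (by simp)
      rw [hi, Fin.snoc_castSucc, Fin.snoc_castSucc]
      have := H1 ⟨(i:ℕ), hilt⟩ j' (by simpa using hadj)
      simpa using this

theorem pe_snoc {m : ℕ} (e' : Fin (m+1) → ℕ) (x : ℕ) :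
    PEprop (Fin.snoc e' x : Fin (m+2) → ℕ) ↔
      PEprop e' ∧ (0 < e' (Fin.last m) → 0 < x ∧ x ≤ e' (Fin.last m)) := by
  constructor
  · intro H
    constructor
    · intro i j hadj
      have h := H i.castSucc j.castSucc (by simpa using hadj)
      simpa [Fin.snoc_castSucc] using h
    · have h := H (Fin.last m).castSucc (Fin.last (m+1)) (by simp)
      simpa [Fin.snoc_castSucc, Fin.snoc_last] using h
  · rintro ⟨H1, H2⟩ i j hadj
    cases j using Fin.lastCases with
    | last =>
      have hi : i = (Fin.last m).castSucc := Fin.ext (by simp at hadj ⊢; omega)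
      subst hi
      simpa [Fin.snoc_castSucc, Fin.snoc_last] using H2
    | cast j' =>
      have hilt : (i:ℕ) < m + 1 := by simp at hadj; have := j'.isLt; omega
      have hi : i = Fin.castSucc ⟨(i:ℕ), hilt⟩ := Fin.ext (by simp)
      rw [hi, Fin.snoc_castSucc, Fin.snoc_castSucc]
      have := H1 ⟨(i:ℕ), hilt⟩ j' (by simpa using hadj)
      simpa using this

theorem pf_snoc {m : ℕ} (e' : Fin (m+1) → ℕ) (x : ℕ) :
    PFprop (Fin.snoc e' x : Fin (m+2) → ℕ) ↔
      PFprop e' ∧ (0 < x → ∀ i : Fin (m+1), 0 < e' i → x < e' i) := by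
  constructor
  · intro H
    constructor
    · intro i j hij hpi hpj
      have h := H i.castSucc j.castSucc (Fin.castSucc_lt_castSucc_iff.mpr hij)
      simp only [Fin.snoc_castSucc] at h
      exact h hpi hpj
    · intro hx i hpi
      have h := H i.castSucc (Fin.last (m+1)) (Fin.castSucc_lt_last _)
      simp only [Fin.snoc_castSucc, Fin.snoc_last] at h
      exact h hpi hx
  · rintro ⟨H1, H2⟩ i j hij hpi hpj
    cases j using Fin.lastCases with
    | last =>
      have hilt : (i:ℕ) < m + 1 := by rw [Fin.lt_def] at hij; simp at hij; omega
      have hi : i = Fin.castSucc ⟨(i:ℕ), hilt⟩ := Fin.ext (by simp)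
      rw [hi, Fin.snoc_castSucc] at hpi ⊢
      rw [Fin.snoc_last] at hpj ⊢
      exact H2 hpj _ hpi
    | cast j' =>
      have hjlt := j'.isLt
      have hilt : (i:ℕ) < m + 1 := by rw [Fin.lt_def] at hij; simp at hij; omega
      have hi : i = Fin.castSucc ⟨(i:ℕ), hilt⟩ := Fin.ext (by simp)
      rw [hi, Fin.snoc_castSucc] at hpi ⊢
      rw [Fin.snoc_castSucc] at hpj ⊢
      refine H1 _ _ ?_ hpi hpj
      rw [Fin.lt_def] at hij ⊢
      simpa using hij

noncomputable def DS (m : ℕ) : Finset (Fin m → ℕ) := (Iseq m).filter (fun e => LocalD e)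

theorem mem_DS {m : ℕ} {e : Fin m → ℕ} : e ∈ DS m ↔ InvSeq e ∧ LocalD e := by
  rw [DS, Finset.mem_filter, mem_Iseq]

theorem last_le {m : ℕ} {e : Fin (m+1) → ℕ} (h : InvSeq e) : e (Fin.last m) ≤ m := by
  have := h (Fin.last m); simpa using this

theorem DS_one : DS 1 = {fun _ : Fin 1 => (0:ℕ)} := by
  ext e
  rw [mem_DS, Finset.mem_singleton]
  constructor
  · rintro ⟨hI, -⟩
    funext i
    have h1 := hI i
    have h2 : (i:ℕ) = 0 := by omega
    omega
  · rintro rfl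
    exact ⟨fun i => by simp, fun i j h => Or.inl le_rfl⟩

theorem DS_snoc_mem {m : ℕ} (e' : Fin (m+1) → ℕ) (x : ℕ) :
    (Fin.snoc e' x : Fin (m+2) → ℕ) ∈ DS (m+2) ↔
      e' ∈ DS (m+1) ∧ (x ≤ e' (Fin.last m) ∨ (e' (Fin.last m) = m ∧ x = m+1)) := by
  rw [mem_DS, mem_DS, invSeq_snoc, localD_snoc]
  constructor
  · rintro ⟨⟨h1, h2⟩, h3, h4⟩
    exact ⟨⟨h1, h3⟩, h4⟩
  · rintro ⟨⟨h1, h3⟩, h4⟩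
    have hb := last_le h1
    refine ⟨⟨h1, by omega⟩, h3, h4⟩

theorem DS_key (m v : ℕ) : ((DS (m+2)).filter (fun e => e (Fin.last (m+1)) = v)).card
    = ((DS (m+1)).filter (fun e' =>
        v ≤ e' (Fin.last m) ∨ (e' (Fin.last m) = m ∧ v = m+1))).card := by
  apply card_eq_of_snoc
  intro e
  rw [Finset.mem_filter, Finset.mem_filter]
  constructor
  · rintro ⟨heDS, hlast⟩
    rw [← Fin.snoc_init_self e] at heDS
    rw [DS_snoc_mem] at heDS
    refine ⟨⟨heDS.1, ?_⟩, hlast⟩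
    rw [← hlast]
    exact heDS.2
  · rintro ⟨⟨h1, h2⟩, hlast⟩
    refine ⟨?_, hlast⟩
    rw [← Fin.snoc_init_self e, DS_snoc_mem]
    exact ⟨h1, by rw [hlast]; exact h2⟩

theorem DS_heq1 {m v : ℕ} (hv : v < m+1) : (DS (m+1)).filter (fun e' =>
      v ≤ e' (Fin.last m) ∨ (e' (Fin.last m) = m ∧ v = m+1))
    = (DS (m+1)).filter (fun e' => v ≤ e' (Fin.last m)) := by
  apply Finset.filter_congr
  intro e he
  rw [mem_DS] at he
  have hble := last_le he.1
  show (v ≤ e (Fin.last m) ∨ (e (Fin.last m) = m ∧ v = m+1)) ↔ v ≤ e (Fin.last m)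
  constructor
  · rintro (h' | ⟨h1, h2⟩)
    · exact h'
    · omega
  · exact Or.inl

theorem DS_heq2 {m : ℕ} : (DS (m+1)).filter (fun e' =>
      (m+1) ≤ e' (Fin.last m) ∨ (e' (Fin.last m) = m ∧ (m+1:ℕ) = m+1))
    = (DS (m+1)).filter (fun e' => e' (Fin.last m) = m) := by
  apply Finset.filter_congr
  intro e he
  rw [mem_DS] at he
  have hble := last_le he.1
  show ((m+1) ≤ e (Fin.last m) ∨ (e (Fin.last m) = m ∧ (m+1:ℕ) = m+1)) ↔ e (Fin.last m) = m
  constructor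
  · rintro (h' | ⟨h1, h2⟩)
    · omega
    · exact h1
  · intro h'; exact Or.inr ⟨h', rfl⟩

theorem DS_heq3 {m v : ℕ} (hv : m+1 < v) : (DS (m+1)).filter (fun e' =>
      v ≤ e' (Fin.last m) ∨ (e' (Fin.last m) = m ∧ v = m+1)) = ∅ := by
  rw [Finset.filter_eq_empty_iff]
  intro e he
  rw [mem_DS] at he
  have hble := last_le he.1
  show ¬(v ≤ e (Fin.last m) ∨ (e (Fin.last m) = m ∧ v = m+1))
  rintro (h' | ⟨h1, h2⟩) <;> omega

theorem dcount_eq : ∀ m v : ℕ, ((DS (m+1)).filter (fun e => e (Fin.last m) = v)).card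
    = if v = m then 1 else if v < m then 2^(m-1-v) else 0 := by
  intro m
  induction m with
  | zero =>
    intro v
    rw [DS_one]
    rcases eq_or_ne v 0 with rfl | hv
    · simp [Finset.filter_singleton]
    · simp [Finset.filter_singleton, Ne.symm hv, hv]
  | succ m IH =>
    intro v
    rw [DS_key m v]
    rcases Nat.lt_trichotomy v (m+1) with hv | hv | hv
    · have hv' : v ≤ m := Nat.lt_succ_iff.mp hv
      rw [DS_heq1 hv, card_filter_le_eq_sum (DS (m+1)) (fun e => e (Fin.last m)) m v
        (fun e he => last_le (mem_DS.mp he).1)]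
      rw [Finset.sum_congr rfl (fun u (_ : u ∈ Finset.Icc v m) => IH u)]
      have hs := sumD (m - v) v
      rw [Nat.add_sub_cancel' hv'] at hs
      rw [hs, if_neg (Nat.ne_of_lt hv), if_pos hv, Nat.succ_sub_one]
    · subst hv
      rw [DS_heq2, IH m, if_pos rfl, if_pos rfl]
    · rw [DS_heq3 hv, if_neg (ne_of_gt hv), if_neg (Nat.not_lt.mpr hv.le)]
      simp

theorem cardDS (m : ℕ) : (DS (m+1)).card = 2^m := by
  have h0 : (DS (m+1)).filter (fun e => 0 ≤ e (Fin.last m)) = DS (m+1) :=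
    Finset.filter_true_of_mem (fun _ _ => Nat.zero_le _)
  rw [← h0, card_filter_le_eq_sum (DS (m+1)) (fun e => e (Fin.last m)) m 0
    (fun e he => last_le (mem_DS.mp he).1)]
  rw [Finset.sum_congr rfl (fun u (_ : u ∈ Finset.Icc 0 m) => dcount_eq m u)]
  have hs := sumD m 0
  rw [zero_add] at hs
  exact hs

theorem one_add_pred (t : ℕ) (h : 1 ≤ t) : 1 + (t - 1) = t := by omega

theorem sumE (M : ℕ) : ∑ u ∈ Finset.Icc 0 M,
    (if u = 0 then 1 else if u ≤ M then 2^(M-u) else 0) = 2^M := by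
  have hins : Finset.Icc 0 M = insert 0 (Finset.Icc 1 M) := by
    ext u; simp only [Finset.mem_Icc, Finset.mem_insert]; omega
  rw [hins, Finset.sum_insert (by simp)]
  rw [if_pos rfl]
  have h1 : ∑ u ∈ Finset.Icc 1 M, (if u = 0 then 1 else if u ≤ M then 2^(M-u) else 0)
      = ∑ u ∈ Finset.Icc 1 M, 2^(M-u) := by
    refine Finset.sum_congr rfl fun u hu => ?_
    simp only [Finset.mem_Icc] at hu
    rw [if_neg (by omega), if_pos (by omega)]
  rw [h1, geo1' 1 M]
  have h2 : 1 ≤ 2^M := Nat.one_le_two_pow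
  have h3 : M + 1 - 1 = M := by omega
  rw [h3]
  omega

noncomputable def ES (m : ℕ) : Finset (Fin m → ℕ) := (Iseq m).filter (fun e => PEprop e)

theorem mem_ES {m : ℕ} {e : Fin m → ℕ} : e ∈ ES m ↔ InvSeq e ∧ PEprop e := by
  rw [ES, Finset.mem_filter, mem_Iseq]

theorem ES_one : ES 1 = {fun _ : Fin 1 => (0:ℕ)} := by
  ext e
  rw [mem_ES, Finset.mem_singleton]
  constructor
  · rintro ⟨hI, -⟩
    funext i
    have h1 := hI i
    have h2 : (i:ℕ) = 0 := by omega
    omega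
  · rintro rfl
    exact ⟨fun i => by simp, fun i j h hp => by simp at hp⟩

theorem ES_snoc_mem {m : ℕ} (e' : Fin (m+1) → ℕ) (x : ℕ) :
    (Fin.snoc e' x : Fin (m+2) → ℕ) ∈ ES (m+2) ↔
      e' ∈ ES (m+1) ∧ (x ≤ m+1 ∧ (0 < e' (Fin.last m) → 0 < x ∧ x ≤ e' (Fin.last m))) := by
  rw [mem_ES, mem_ES, invSeq_snoc, pe_snoc]
  constructor
  · rintro ⟨⟨h1, h2⟩, h3, h4⟩
    exact ⟨⟨h1, h3⟩, h2, h4⟩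
  · rintro ⟨⟨h1, h3⟩, h2, h4⟩
    exact ⟨⟨h1, h2⟩, h3, h4⟩

theorem ES_key (m v : ℕ) : ((ES (m+2)).filter (fun e => e (Fin.last (m+1)) = v)).card
    = ((ES (m+1)).filter (fun e' =>
        v ≤ m+1 ∧ (0 < e' (Fin.last m) → 0 < v ∧ v ≤ e' (Fin.last m)))).card := by
  apply card_eq_of_snoc
  intro e
  rw [Finset.mem_filter, Finset.mem_filter]
  constructor
  · rintro ⟨heDS, hlast⟩
    rw [← Fin.snoc_init_self e] at heDS
    rw [ES_snoc_mem] at heDS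
    refine ⟨⟨heDS.1, ?_⟩, hlast⟩
    rw [← hlast]
    exact heDS.2
  · rintro ⟨⟨h1, h2⟩, hlast⟩
    refine ⟨?_, hlast⟩
    rw [← Fin.snoc_init_self e, ES_snoc_mem]
    exact ⟨h1, by rw [hlast]; exact h2⟩

theorem ES_heq0 {m : ℕ} : (ES (m+1)).filter (fun e' =>
      (0:ℕ) ≤ m+1 ∧ (0 < e' (Fin.last m) → 0 < 0 ∧ 0 ≤ e' (Fin.last m)))
    = (ES (m+1)).filter (fun e' => e' (Fin.last m) = 0) := by
  apply Finset.filter_congr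
  intro e he
  show ((0:ℕ) ≤ m+1 ∧ (0 < e (Fin.last m) → 0 < 0 ∧ 0 ≤ e (Fin.last m))) ↔ e (Fin.last m) = 0
  constructor
  · rintro ⟨-, h⟩
    by_contra hne
    exact absurd ((h (by omega)).1) (by omega)
  · intro h'
    exact ⟨by omega, fun hp => absurd hp (by omega)⟩

theorem ES_heq1 {m v : ℕ} (hv1 : 1 ≤ v) (hv2 : v ≤ m+1) : (ES (m+1)).filter (fun e' =>
      v ≤ m+1 ∧ (0 < e' (Fin.last m) → 0 < v ∧ v ≤ e' (Fin.last m)))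
    = (ES (m+1)).filter (fun e' => e' (Fin.last m) = 0 ∨ v ≤ e' (Fin.last m)) := by
  apply Finset.filter_congr
  intro e he
  show (v ≤ m+1 ∧ (0 < e (Fin.last m) → 0 < v ∧ v ≤ e (Fin.last m)))
      ↔ (e (Fin.last m) = 0 ∨ v ≤ e (Fin.last m))
  constructor
  · rintro ⟨-, h⟩
    by_cases h0 : e (Fin.last m) = 0
    · exact Or.inl h0
    · exact Or.inr (h (by omega)).2
  · rintro (h' | h')
    · exact ⟨hv2, fun hp => absurd hp (by omega)⟩
    · exact ⟨hv2, fun hp => ⟨hv1, h'⟩⟩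

theorem ES_heq3 {m v : ℕ} (hv : m+1 < v) : (ES (m+1)).filter (fun e' =>
      v ≤ m+1 ∧ (0 < e' (Fin.last m) → 0 < v ∧ v ≤ e' (Fin.last m))) = ∅ := by
  rw [Finset.filter_eq_empty_iff]
  intro e he
  show ¬(v ≤ m+1 ∧ (0 < e (Fin.last m) → 0 < v ∧ v ≤ e (Fin.last m)))
  rintro ⟨h', -⟩
  omega

theorem ecount_eq : ∀ m v : ℕ, ((ES (m+1)).filter (fun e => e (Fin.last m) = v)).card
    = if v = 0 then 1 else if v ≤ m then 2^(m-v) else 0 := by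
  intro m
  induction m with
  | zero =>
    intro v
    rw [ES_one]
    rcases eq_or_ne v 0 with rfl | hv
    · simp [Finset.filter_singleton]
    · simp [Finset.filter_singleton, Ne.symm hv, hv]
  | succ m IH =>
    intro v
    rw [ES_key m v]
    rcases eq_or_ne v 0 with rfl | hv0
    · rw [ES_heq0, IH 0, if_pos rfl, if_pos rfl]
    rcases Nat.lt_or_ge (m+1) v with hv | hv
    · rw [ES_heq3 hv, if_neg hv0, if_neg (by omega)]
      simp
    · -- 1 ≤ v ≤ m+1
      have hv1 : 1 ≤ v := by omega
      rw [ES_heq1 hv1 hv, Finset.filter_or,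
        Finset.card_union_of_disjoint (by
          rw [Finset.disjoint_left]
          intro e h1 h2
          rw [Finset.mem_filter] at h1 h2
          omega)]
      rw [IH 0, if_pos rfl]
      rw [card_filter_le_eq_sum (ES (m+1)) (fun e => e (Fin.last m)) m v
        (fun e he => last_le (mem_ES.mp he).1)]
      rw [Finset.sum_congr rfl (fun u (hu : u ∈ Finset.Icc v m) => by
        have hu' := Finset.mem_Icc.mp hu
        rw [IH u, if_neg (by omega), if_pos hu'.2])]
      rw [geo1' v m, if_neg hv0, if_pos hv]
      exact one_add_pred _ Nat.one_le_two_pow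

theorem cardES (m : ℕ) : (ES (m+1)).card = 2^m := by
  have h0 : (ES (m+1)).filter (fun e => 0 ≤ e (Fin.last m)) = ES (m+1) :=
    Finset.filter_true_of_mem (fun _ _ => Nat.zero_le _)
  rw [← h0, card_filter_le_eq_sum (ES (m+1)) (fun e => e (Fin.last m)) m 0
    (fun e he => last_le (mem_ES.mp he).1)]
  rw [Finset.sum_congr rfl (fun u (_ : u ∈ Finset.Icc 0 m) => ecount_eq m u)]
  exact sumE m

theorem dbl (k : ℕ) : 2^k + 2^k = 2^(k+1) := by rw [pow_succ]; omega

noncomputable def mu {m : ℕ} (e : Fin m → ℕ) : ℕ := sInf {v : ℕ | 0 < v ∧ ∃ i, e i = v}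

theorem mu_zero (m : ℕ) : mu (fun _ : Fin m => (0:ℕ)) = 0 := by
  rw [mu]
  convert Nat.sInf_empty
  rw [Set.eq_empty_iff_forall_notMem]
  rintro v ⟨hv, i, hi⟩
  omega

theorem mu_le {m : ℕ} {e : Fin m → ℕ} {i : Fin m} (h : 0 < e i) : mu e ≤ e i :=
  Nat.sInf_le ⟨h, i, rfl⟩

theorem mu_mem {m : ℕ} {e : Fin m → ℕ} {i : Fin m} (h : 0 < e i) :
    0 < mu e ∧ ∃ j, e j = mu e := by
  have hne : {v : ℕ | 0 < v ∧ ∃ j, e j = v}.Nonempty := ⟨e i, h, i, rfl⟩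
  have hmem := Nat.sInf_mem hne
  obtain ⟨h1, j, h2⟩ := hmem
  exact ⟨h1, j, h2⟩

theorem mu_eq_zero_iff {m : ℕ} {e : Fin m → ℕ} : mu e = 0 ↔ ∀ i, e i = 0 := by
  constructor
  · intro h i
    by_contra hne
    have := (mu_mem (e := e) (i := i) (by omega)).1
    omega
  · intro h
    rw [mu]
    convert Nat.sInf_empty
    rw [Set.eq_empty_iff_forall_notMem]
    rintro v ⟨hv, i, hi⟩
    have := h i
    omega

theorem mu_snoc_zero {m : ℕ} (e' : Fin (m+1) → ℕ) :
    mu (Fin.snoc e' 0 : Fin (m+2) → ℕ) = mu e' := by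
  rw [mu, mu]
  congr 1
  ext v
  simp only [Set.mem_setOf_eq]
  constructor
  · rintro ⟨hv, i, hi⟩
    cases i using Fin.lastCases with
    | last => rw [Fin.snoc_last] at hi; omega
    | cast i' => rw [Fin.snoc_castSucc] at hi; exact ⟨hv, i', hi⟩
  · rintro ⟨hv, i', hi⟩
    exact ⟨hv, i'.castSucc, by rw [Fin.snoc_castSucc]; exact hi⟩

theorem mu_snoc_pos {m : ℕ} (e' : Fin (m+1) → ℕ) (x : ℕ) (hx : 0 < x)
    (hall : ∀ i : Fin (m+1), 0 < e' i → x < e' i) :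
    mu (Fin.snoc e' x : Fin (m+2) → ℕ) = x := by
  have hxm : x ∈ {v : ℕ | 0 < v ∧ ∃ i, (Fin.snoc e' x : Fin (m+2) → ℕ) i = v} :=
    ⟨hx, Fin.last (m+1), Fin.snoc_last _ _⟩
  apply le_antisymm
  · exact Nat.sInf_le hxm
  · apply le_csInf ⟨x, hxm⟩
    rintro b ⟨hb, i, hi⟩
    cases i using Fin.lastCases with
    | last => rw [Fin.snoc_last] at hi; omega
    | cast i' =>
      rw [Fin.snoc_castSucc] at hi
      have := hall i' (by omega)
      omega

noncomputable def FS (m : ℕ) : Finset (Fin m → ℕ) := (Iseq m).filter (fun e => PFprop e)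

theorem mem_FS {m : ℕ} {e : Fin m → ℕ} : e ∈ FS m ↔ InvSeq e ∧ PFprop e := by
  rw [FS, Finset.mem_filter, mem_Iseq]

theorem FS_one : FS 1 = {fun _ : Fin 1 => (0:ℕ)} := by
  ext e
  rw [mem_FS, Finset.mem_singleton]
  constructor
  · rintro ⟨hI, -⟩
    funext i
    have h1 := hI i
    have h2 : (i:ℕ) = 0 := by omega
    omega
  · rintro rfl
    exact ⟨fun i => by simp, fun i j h hp => by simp at hp⟩

theorem mu_le_m {m : ℕ} {e : Fin (m+1) → ℕ} (h : InvSeq e) : mu e ≤ m := by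
  by_cases h0 : ∀ i, e i = 0
  · rw [mu_eq_zero_iff.mpr h0]; omega
  · push_neg at h0
    obtain ⟨i, hi⟩ := h0
    have h1 := mu_le (e := e) (i := i) (by omega)
    have h2 := h i
    have h3 : (i:ℕ) ≤ m := by have := i.isLt; omega
    omega

theorem FS_snoc_mem {m : ℕ} (e' : Fin (m+1) → ℕ) (x : ℕ) :
    (Fin.snoc e' x : Fin (m+2) → ℕ) ∈ FS (m+2) ↔
      e' ∈ FS (m+1) ∧ (x ≤ m+1 ∧ (0 < x → ∀ i : Fin (m+1), 0 < e' i → x < e' i)) := by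
  rw [mem_FS, mem_FS, invSeq_snoc, pf_snoc]
  constructor
  · rintro ⟨⟨h1, h2⟩, h3, h4⟩
    exact ⟨⟨h1, h3⟩, h2, h4⟩
  · rintro ⟨⟨h1, h3⟩, h2, h4⟩
    exact ⟨⟨h1, h2⟩, h3, h4⟩

theorem FS_A (m v : ℕ) :
    ((FS (m+2)).filter (fun e => mu e = v ∧ e (Fin.last (m+1)) = 0)).card
      = ((FS (m+1)).filter (fun e' => mu e' = v)).card := by
  apply card_eq_of_snoc _ _ 0
  intro e
  rw [Finset.mem_filter, Finset.mem_filter]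
  constructor
  · rintro ⟨hFS, hmu, hlast⟩
    rw [← Fin.snoc_init_self e] at hFS
    rw [FS_snoc_mem] at hFS
    have hmu2 : mu e = mu (Fin.init e) := by
      conv_lhs => rw [← Fin.snoc_init_self e, hlast]
      exact mu_snoc_zero _
    exact ⟨⟨hFS.1, by rw [← hmu2]; exact hmu⟩, hlast⟩
  · rintro ⟨⟨h1, h2⟩, hlast⟩
    have hmu : mu e = v := by
      conv_lhs => rw [← Fin.snoc_init_self e, hlast]
      rw [mu_snoc_zero]
      exact h2
    refine ⟨?_, hmu, hlast⟩
    rw [← Fin.snoc_init_self e, FS_snoc_mem]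
    refine ⟨h1, by rw [hlast]; omega, ?_⟩
    rw [hlast]
    intro h
    omega

theorem FS_B (m v : ℕ) (hv : 1 ≤ v) :
    ((FS (m+2)).filter (fun e => mu e = v ∧ e (Fin.last (m+1)) ≠ 0)).card
      = ((FS (m+1)).filter (fun e' =>
          v ≤ m+1 ∧ ∀ i : Fin (m+1), 0 < e' i → v < e' i)).card := by
  apply card_eq_of_snoc _ _ v
  intro e
  rw [Finset.mem_filter, Finset.mem_filter]
  constructor
  · rintro ⟨hFS, hmu, hlast⟩
    rw [← Fin.snoc_init_self e] at hFS
    rw [FS_snoc_mem] at hFS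
    obtain ⟨h1, h2, h3⟩ := hFS
    have hall := h3 (by omega)
    have hmu' : mu e = e (Fin.last (m+1)) := by
      conv_lhs => rw [← Fin.snoc_init_self e]
      exact mu_snoc_pos _ _ (by omega) hall
    have hle : e (Fin.last (m+1)) = v := by omega
    refine ⟨⟨h1, by omega, ?_⟩, hle⟩
    rw [← hle]
    exact hall
  · rintro ⟨⟨h1, h2, h3⟩, hlast⟩
    have hallx : ∀ i : Fin (m+1), 0 < Fin.init e i → e (Fin.last (m+1)) < Fin.init e i := by
      rw [hlast]; exact h3
    have hmu : mu e = v := by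
      conv_lhs => rw [← Fin.snoc_init_self e]
      rw [mu_snoc_pos _ _ (by rw [hlast]; omega) hallx]
      exact hlast
    refine ⟨?_, hmu, by rw [hlast]; omega⟩
    rw [← Fin.snoc_init_self e, FS_snoc_mem]
    exact ⟨h1, by rw [hlast]; omega, fun _ => hallx⟩

theorem FS_B_heq (m v : ℕ) (hv1 : 1 ≤ v) (hv2 : v ≤ m+1) :
    (FS (m+1)).filter (fun e' => v ≤ m+1 ∧ ∀ i : Fin (m+1), 0 < e' i → v < e' i)
      = (FS (m+1)).filter (fun e' => mu e' = 0 ∨ v+1 ≤ mu e') := by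
  apply Finset.filter_congr
  intro e he
  show (v ≤ m+1 ∧ ∀ i : Fin (m+1), 0 < e i → v < e i) ↔ (mu e = 0 ∨ v+1 ≤ mu e)
  constructor
  · rintro ⟨-, hall⟩
    by_cases h0 : ∀ i, e i = 0
    · exact Or.inl (mu_eq_zero_iff.mpr h0)
    · push_neg at h0
      obtain ⟨i, hi⟩ := h0
      obtain ⟨hpos, j, hj⟩ := mu_mem (e := e) (i := i) (by omega)
      have := hall j (by omega)
      omega
  · rintro (h0 | hgt)
    · refine ⟨hv2, fun i hi => ?_⟩
      have := mu_eq_zero_iff.mp h0 i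
      omega
    · refine ⟨hv2, fun i hi => ?_⟩
      have := mu_le (e := e) (i := i) hi
      omega

theorem FS_B3 (m v : ℕ) (hv : m+1 < v) :
    (FS (m+1)).filter (fun e' => v ≤ m+1 ∧ ∀ i : Fin (m+1), 0 < e' i → v < e' i) = ∅ := by
  rw [Finset.filter_eq_empty_iff]
  intro e he
  show ¬(v ≤ m+1 ∧ ∀ i : Fin (m+1), 0 < e i → v < e i)
  rintro ⟨h', -⟩
  omega

theorem FS_B0 (m : ℕ) :
    (FS (m+2)).filter (fun e => mu e = 0 ∧ e (Fin.last (m+1)) ≠ 0) = ∅ := by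
  rw [Finset.filter_eq_empty_iff]
  intro e he
  show ¬(mu e = 0 ∧ e (Fin.last (m+1)) ≠ 0)
  rintro ⟨h0, hne⟩
  exact hne (mu_eq_zero_iff.mp h0 _)

theorem fcount_eq : ∀ m v : ℕ, ((FS (m+1)).filter (fun e => mu e = v)).card
    = if v = 0 then 1 else if v ≤ m then 2^(m-v) else 0 := by
  intro m
  induction m with
  | zero =>
    intro v
    rw [FS_one]
    have hmu : mu (fun _ : Fin 1 => (0:ℕ)) = 0 := mu_zero 1
    rcases eq_or_ne v 0 with rfl | hv
    · simp [Finset.filter_singleton, hmu]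
    · simp [Finset.filter_singleton, hmu, Ne.symm hv, hv]
  | succ m IH =>
    intro v
    have hsplit : ((FS (m+2)).filter (fun e => mu e = v)).card
        = ((FS (m+2)).filter (fun e => mu e = v ∧ e (Fin.last (m+1)) = 0)).card
          + ((FS (m+2)).filter (fun e => mu e = v ∧ e (Fin.last (m+1)) ≠ 0)).card := by
      rw [← Finset.card_filter_add_card_filter_not
        (p := fun e => e (Fin.last (m+1)) = 0) (s := (FS (m+2)).filter (fun e => mu e = v)),
        Finset.filter_filter, Finset.filter_filter]
    rw [hsplit]
    clear hsplit
    rcases eq_or_ne v 0 with rfl | hv0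
    · rw [FS_A, IH 0, FS_B0]
      simp
    have hv1 : 1 ≤ v := Nat.one_le_iff_ne_zero.mpr hv0
    rw [FS_A, FS_B m v hv1]
    rcases Nat.lt_or_ge (m+1) v with hv | hv
    · rw [FS_B3 m v hv, IH v]
      rw [if_neg hv0, if_neg (show ¬ v ≤ m by omega), if_neg hv0,
        if_neg (show ¬ v ≤ m+1 by omega)]
      simp
    · rw [FS_B_heq m v hv1 hv, Finset.filter_or,
        Finset.card_union_of_disjoint (by
          rw [Finset.disjoint_left]
          intro e h1 h2
          rw [Finset.mem_filter] at h1 h2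
          omega)]
      rw [IH 0, if_pos rfl]
      rw [card_filter_le_eq_sum (FS (m+1)) (fun e => mu e) m (v+1)
        (fun e he => mu_le_m (mem_FS.mp he).1)]
      rw [Finset.sum_congr rfl (fun u (hu : u ∈ Finset.Icc (v+1) m) => by
        have hu' := Finset.mem_Icc.mp hu
        rw [IH u, if_neg (by omega), if_pos hu'.2])]
      rw [geo1' (v+1) m, IH v, if_neg hv0, if_neg hv0]
      rcases Nat.lt_or_ge m v with hm | hm
      · rw [if_neg (show ¬ v ≤ m by omega), if_pos hv]
        rw [show m+1-(v+1) = 0 by omega, show m+1-v = 0 by omega]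
        simp
      · rw [if_pos hm, if_pos (show v ≤ m+1 by omega),
          show m+1-(v+1) = m-v by omega, show m+1-v = (m-v)+1 by omega, ← dbl (m-v)]
        have h2 : 1 ≤ 2^(m-v) := Nat.one_le_two_pow
        omega

noncomputable def zct {m : ℕ} (e : Fin m → ℕ) : ℕ :=
  (Finset.univ.filter (fun i : Fin m => e i = 0)).card

def PA1 {m : ℕ} (e : Fin m → ℕ) : Prop := ∀ i j : Fin m, i < j → e i = e j → e i = 0

noncomputable def AS (m : ℕ) : Finset (Fin m → ℕ) :=
  (Iseq m).filter (fun e => PA1 e ∧ zct e ≤ 2)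

theorem mem_AS {m : ℕ} {e : Fin m → ℕ} : e ∈ AS m ↔ InvSeq e ∧ PA1 e ∧ zct e ≤ 2 := by
  rw [AS, Finset.mem_filter, mem_Iseq]

theorem pa1_snoc {m : ℕ} (e' : Fin (m+1) → ℕ) (x : ℕ) :
    PA1 (Fin.snoc e' x : Fin (m+2) → ℕ) ↔
      PA1 e' ∧ (∀ i, e' i = x → x = 0) := by
  constructor
  · intro H
    constructor
    · intro i j hij heq
      have h := H i.castSucc j.castSucc (Fin.castSucc_lt_castSucc_iff.mpr hij)
      simp only [Fin.snoc_castSucc] at h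
      exact h heq
    · intro i hi
      have h := H i.castSucc (Fin.last (m+1)) (Fin.castSucc_lt_last _)
      simp only [Fin.snoc_castSucc, Fin.snoc_last] at h
      rw [← hi]
      exact h hi
  · rintro ⟨H1, H2⟩ i j hij heq
    cases j using Fin.lastCases with
    | last =>
      have hilt : (i:ℕ) < m + 1 := by rw [Fin.lt_def] at hij; simp at hij; omega
      have hi : i = Fin.castSucc ⟨(i:ℕ), hilt⟩ := Fin.ext (by simp)
      rw [hi, Fin.snoc_castSucc] at heq ⊢
      rw [Fin.snoc_last] at heq
      rw [heq]
      exact H2 _ heq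
    | cast j' =>
      have hilt : (i:ℕ) < m + 1 := by rw [Fin.lt_def] at hij; simp at hij; have := j'.isLt; omega
      have hi : i = Fin.castSucc ⟨(i:ℕ), hilt⟩ := Fin.ext (by simp)
      rw [hi, Fin.snoc_castSucc] at heq ⊢
      rw [Fin.snoc_castSucc] at heq
      refine H1 _ _ ?_ heq
      rw [hi, Fin.castSucc_lt_castSucc_iff] at hij
      exact hij

theorem zc_snoc {m : ℕ} (e' : Fin (m+1) → ℕ) (x : ℕ) :
    zct (Fin.snoc e' x : Fin (m+2) → ℕ) = zct e' + if x = 0 then 1 else 0 := by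
  rw [zct, zct, Finset.card_filter, Finset.card_filter, Fin.sum_univ_castSucc]
  simp only [Fin.snoc_castSucc, Fin.snoc_last]

theorem AS_snoc_mem {m : ℕ} (e' : Fin (m+1) → ℕ) (x : ℕ) :
    (Fin.snoc e' x : Fin (m+2) → ℕ) ∈ AS (m+2) ↔
      e' ∈ AS (m+1) ∧ x ≤ m+1 ∧
        ((x = 0 ∧ zct e' ≤ 1) ∨ (x ≠ 0 ∧ ∀ i, e' i ≠ x)) := by
  rw [mem_AS, mem_AS, invSeq_snoc, pa1_snoc, zc_snoc]
  constructor
  · rintro ⟨⟨hI, hxle⟩, ⟨h1, h2⟩, h3⟩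
    by_cases hx : x = 0
    · subst hx
      rw [if_pos rfl] at h3
      exact ⟨⟨hI, h1, by omega⟩, hxle, Or.inl ⟨rfl, by omega⟩⟩
    · rw [if_neg hx] at h3
      exact ⟨⟨hI, h1, by omega⟩, hxle, Or.inr ⟨hx, fun i hi => hx (h2 i hi)⟩⟩
  · rintro ⟨⟨hI, h1, h2⟩, hxle, hcase⟩
    refine ⟨⟨hI, hxle⟩, ⟨h1, ?_⟩, ?_⟩
    · rcases hcase with ⟨rfl, -⟩ | ⟨hx, hne⟩
      · exact fun i _ => rfl
      · exact fun i hi => absurd hi (hne i)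
    · rcases hcase with ⟨rfl, hz⟩ | ⟨hx, -⟩
      · rw [if_pos rfl]; omega
      · rw [if_neg hx]; omega

theorem zct_ge_one {m : ℕ} {e : Fin (m+1) → ℕ} (hI : InvSeq e) : 1 ≤ zct e := by
  rw [zct]
  apply Finset.card_pos.mpr
  refine ⟨⟨0, Nat.succ_pos m⟩, ?_⟩
  rw [Finset.mem_filter]
  refine ⟨Finset.mem_univ _, ?_⟩
  have := hI ⟨0, Nat.succ_pos m⟩
  simpa using this

theorem ascount {m : ℕ} (e' : Fin (m+1) → ℕ) (hmem : e' ∈ AS (m+1)) :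
    ((Finset.range (m+2)).filter
      (fun x => (Fin.snoc e' x : Fin (m+2) → ℕ) ∈ AS (m+2))).card = 2 := by
  obtain ⟨hI, hP1, hzc⟩ := mem_AS.mp hmem
  have hfc : (Finset.range (m+2)).filter
      (fun x => (Fin.snoc e' x : Fin (m+2) → ℕ) ∈ AS (m+2))
      = (Finset.range (m+2)).filter
        (fun x => (x = 0 ∧ zct e' ≤ 1) ∨ (x ≠ 0 ∧ ∀ i, e' i ≠ x)) := by
    apply Finset.filter_congr
    intro x hx
    rw [AS_snoc_mem]
    rw [Finset.mem_range] at hx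
    constructor
    · rintro ⟨-, -, h⟩; exact h
    · intro h; exact ⟨hmem, by omega, h⟩
  rw [hfc, Finset.filter_or, Finset.card_union_of_disjoint (by
    rw [Finset.disjoint_left]
    intro a h1 h2
    rw [Finset.mem_filter] at h1 h2
    tauto)]
  -- first part
  have hz1 : ((Finset.range (m+2)).filter (fun x => x = 0 ∧ zct e' ≤ 1)).card
      = if zct e' ≤ 1 then 1 else 0 := by
    by_cases hzz : zct e' ≤ 1
    · rw [if_pos hzz]
      have : (Finset.range (m+2)).filter (fun x => x = 0 ∧ zct e' ≤ 1) = {0} := by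
        ext a
        simp only [Finset.mem_filter, Finset.mem_range, Finset.mem_singleton]
        constructor
        · rintro ⟨-, rfl, -⟩; rfl
        · rintro rfl; exact ⟨by omega, rfl, hzz⟩
      rw [this, Finset.card_singleton]
    · rw [if_neg hzz]
      have : (Finset.range (m+2)).filter (fun x => x = 0 ∧ zct e' ≤ 1) = ∅ := by
        rw [Finset.filter_eq_empty_iff]
        rintro a - ⟨-, h⟩
        exact hzz h
      rw [this, Finset.card_empty]
  -- second part: positives not hit
  have himg : ((Finset.univ.filter (fun i : Fin (m+1) => e' i ≠ 0)).image e').card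
      = m + 1 - zct e' := by
    rw [Finset.card_image_of_injOn (by
      intro i hi j hj heq
      rw [Finset.mem_coe, Finset.mem_filter] at hi hj
      rcases lt_trichotomy i j with h | h | h
      · exact absurd (hP1 i j h heq) hi.2
      · exact h
      · exact absurd (hP1 j i h heq.symm) hj.2)]
    have hsplit2 := Finset.card_filter_add_card_filter_not
      (p := fun i : Fin (m+1) => e' i = 0) (s := Finset.univ)
    rw [Finset.card_univ, Fintype.card_fin] at hsplit2
    have hz : zct e' = (Finset.univ.filter (fun i : Fin (m+1) => e' i = 0)).card := rfl
    calc (Finset.univ.filter (fun i : Fin (m+1) => e' i ≠ 0)).card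
        = (Finset.univ.filter (fun i : Fin (m+1) => ¬ e' i = 0)).card := rfl
      _ = m + 1 - zct e' := by omega
  have hsub : ((Finset.univ.filter (fun i : Fin (m+1) => e' i ≠ 0)).image e')
      ⊆ Finset.Icc 1 (m+1) := by
    intro a ha
    rw [Finset.mem_image] at ha
    obtain ⟨i, hi, rfl⟩ := ha
    rw [Finset.mem_filter] at hi
    have h1 := hI i
    have h2 : (i:ℕ) ≤ m := by have := i.isLt; omega
    rw [Finset.mem_Icc]
    have : e' i ≠ 0 := hi.2
    omega
  have hs2 : ((Finset.range (m+2)).filter (fun x => x ≠ 0 ∧ ∀ i, e' i ≠ x))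
      = Finset.Icc 1 (m+1) \ ((Finset.univ.filter (fun i : Fin (m+1) => e' i ≠ 0)).image e') := by
    ext a
    simp only [Finset.mem_filter, Finset.mem_range, Finset.mem_sdiff, Finset.mem_Icc,
      Finset.mem_image]
    constructor
    · rintro ⟨hr, hne, hall⟩
      refine ⟨⟨by omega, by omega⟩, ?_⟩
      rintro ⟨i, -, hi⟩
      exact hall i hi
    · rintro ⟨⟨h1, h2⟩, hno⟩
      refine ⟨by omega, by omega, fun i hi => ?_⟩
      exact hno ⟨i, ⟨Finset.mem_univ _, by omega⟩, hi⟩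
  have hzle : zct e' ≤ m + 1 := by
    have h := Finset.card_le_card
      (Finset.filter_subset (fun i : Fin (m+1) => e' i = 0) Finset.univ)
    rw [Finset.card_univ, Fintype.card_fin] at h
    exact h
  have hcard2 : ((Finset.range (m+2)).filter (fun x => x ≠ 0 ∧ ∀ i, e' i ≠ x)).card = zct e' := by
    rw [hs2, Finset.card_sdiff_of_subset hsub, himg, Nat.card_Icc]
    omega
  rw [hz1, hcard2]
  have hge := zct_ge_one hI
  by_cases hzz : zct e' ≤ 1
  · rw [if_pos hzz]; omega
  · rw [if_neg hzz]; omega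

theorem AS_one : AS 1 = {fun _ : Fin 1 => (0:ℕ)} := by
  ext e
  rw [mem_AS, Finset.mem_singleton]
  constructor
  · rintro ⟨hI, -⟩
    funext i
    have h1 := hI i
    have h2 : (i:ℕ) = 0 := by omega
    omega
  · rintro rfl
    refine ⟨fun i => by simp, fun i j h => by rw [Fin.lt_def] at h; omega, ?_⟩
    rw [zct]
    have : (Finset.univ.filter (fun i : Fin 1 => (0:ℕ) = 0)) = Finset.univ := by
      simp
    rw [this, Finset.card_univ, Fintype.card_fin]
    omega

theorem cardAS_step (m : ℕ) : (AS (m+2)).card = 2 * (AS (m+1)).card := by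
  rw [card_eq_sum_snoc (AS (m+2)) (AS (m+1))
    (fun e' => (Finset.range (m+2)).filter
      (fun x => (Fin.snoc e' x : Fin (m+2) → ℕ) ∈ AS (m+2)))
    (fun e => by
      constructor
      · intro he
        have hsnoc : (Fin.snoc (Fin.init e) (e (Fin.last (m+1))) : Fin (m+2) → ℕ) ∈ AS (m+2) := by
          rw [Fin.snoc_init_self]; exact he
        have h1 := (AS_snoc_mem _ _).mp hsnoc
        refine ⟨h1.1, ?_⟩
        rw [Finset.mem_filter, Finset.mem_range]
        exact ⟨by have := h1.2.1; omega, hsnoc⟩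
      · rintro ⟨h1, h2⟩
        rw [Finset.mem_filter] at h2
        rw [← Fin.snoc_init_self e]
        exact h2.2)]
  rw [Finset.sum_congr rfl (fun e' he' => ascount e' he')]
  rw [Finset.sum_const, smul_eq_mul, mul_comm]

theorem cardAS (m : ℕ) : (AS (m+1)).card = 2^m := by
  induction m with
  | zero => rw [AS_one, Finset.card_singleton, pow_zero]
  | succ m IH =>
    rw [cardAS_step, IH, pow_succ, mul_comm]

theorem cardFS (m : ℕ) : (FS (m+1)).card = 2^m := by
  have h0 : (FS (m+1)).filter (fun e => 0 ≤ mu e) = FS (m+1) :=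
    Finset.filter_true_of_mem (fun _ _ => Nat.zero_le _)
  rw [← h0, card_filter_le_eq_sum (FS (m+1)) (fun e => mu e) m 0
    (fun e he => mu_le_m (mem_FS.mp he).1)]
  rw [Finset.sum_congr rfl (fun u (_ : u ∈ Finset.Icc 0 m) => fcount_eq m u)]
  exact sumE m

theorem stmt_3 (n : ℕ) (hn : 1 ≤ n) (p q : List ℕ)
    (hpq : (p, q) = ([0,0,0], [0,1,1]) ∨ (p, q) = ([0,0,1], [1,0,1]) ∨
           (p, q) = ([0,0,1], [1,0,2]) ∨ (p, q) = ([0,0,1], [2,0,1]) ∨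
           (p, q) = ([0,1,0], [0,1,2]) ∨ (p, q) = ([0,1,1], [0,1,2])) :
    Nat.card {e : Fin n → ℕ // InvSeq e ∧ Avoids e p ∧ Avoids e q}
      = 2 ^ (n - 1) := by
  obtain ⟨m, rfl⟩ : ∃ m, n = m + 1 := ⟨n - 1, by omega⟩
  have hconv : ∀ (S : Finset (Fin (m+1) → ℕ)),
      (∀ e : Fin (m+1) → ℕ, e ∈ S ↔ InvSeq e ∧ Avoids e p ∧ Avoids e q) →
      Nat.card {e : Fin (m+1) → ℕ // InvSeq e ∧ Avoids e p ∧ Avoids e q} = S.card := by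
    intro S hS
    rw [← Nat.card_eq_finsetCard S]
    exact Nat.card_congr (Equiv.subtypeEquivRight (fun e => (hS e).symm))
  rw [Nat.add_sub_cancel]
  rcases hpq with h | h | h | h | h | h <;>
    (rw [Prod.mk.injEq] at h; obtain ⟨hp', hq'⟩ := h; subst hp'; subst hq')
  · have hiff : ∀ e : Fin (m+1) → ℕ, e ∈ AS (m+1) ↔
        InvSeq e ∧ Avoids e [0,0,0] ∧ Avoids e [0,1,1] := by
      intro e
      rw [mem_AS]
      constructor
      · rintro ⟨hI, h1, h2⟩
        exact ⟨hI, pa_avoids_000 ⟨h1, h2⟩, pa_avoids_011 ⟨h1, h2⟩⟩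
      · rintro ⟨hI, h1, h2⟩
        have hPA := pa_of_avoids hI h1 h2
        exact ⟨hI, hPA.1, hPA.2⟩
    rw [hconv (AS (m+1)) hiff, cardAS]
  · have hiff : ∀ e : Fin (m+1) → ℕ, e ∈ DS (m+1) ↔
        InvSeq e ∧ Avoids e [0,0,1] ∧ Avoids e [1,0,1] := by
      intro e
      rw [mem_DS]
      constructor
      · rintro ⟨hI, hD⟩
        exact ⟨hI, localD_avoids_001 hD hI, localD_avoids_101 hD hI⟩
      · rintro ⟨hI, h1, h2⟩
        exact ⟨hI, localD_of_avoids_001 hI h1⟩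
    rw [hconv (DS (m+1)) hiff, cardDS]
  · have hiff : ∀ e : Fin (m+1) → ℕ, e ∈ DS (m+1) ↔
        InvSeq e ∧ Avoids e [0,0,1] ∧ Avoids e [1,0,2] := by
      intro e
      rw [mem_DS]
      constructor
      · rintro ⟨hI, hD⟩
        exact ⟨hI, localD_avoids_001 hD hI, localD_avoids_102 hD hI⟩
      · rintro ⟨hI, h1, h2⟩
        exact ⟨hI, localD_of_avoids_001 hI h1⟩
    rw [hconv (DS (m+1)) hiff, cardDS]
  · have hiff : ∀ e : Fin (m+1) → ℕ, e ∈ DS (m+1) ↔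
        InvSeq e ∧ Avoids e [0,0,1] ∧ Avoids e [2,0,1] := by
      intro e
      rw [mem_DS]
      constructor
      · rintro ⟨hI, hD⟩
        exact ⟨hI, localD_avoids_001 hD hI, localD_avoids_201 hD hI⟩
      · rintro ⟨hI, h1, h2⟩
        exact ⟨hI, localD_of_avoids_001 hI h1⟩
    rw [hconv (DS (m+1)) hiff, cardDS]
  · have hiff : ∀ e : Fin (m+1) → ℕ, e ∈ ES (m+1) ↔
        InvSeq e ∧ Avoids e [0,1,0] ∧ Avoids e [0,1,2] := by
      intro e
      rw [mem_ES]
      constructor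
      · rintro ⟨hI, hE⟩
        exact ⟨hI, pe_avoids_010 hE, pe_avoids_012 hE⟩
      · rintro ⟨hI, h1, h2⟩
        exact ⟨hI, pe_of_avoids hI h1 h2⟩
    rw [hconv (ES (m+1)) hiff, cardES]
  · have hiff : ∀ e : Fin (m+1) → ℕ, e ∈ FS (m+1) ↔
        InvSeq e ∧ Avoids e [0,1,1] ∧ Avoids e [0,1,2] := by
      intro e
      rw [mem_FS]
      constructor
      · rintro ⟨hI, hF⟩
        exact ⟨hI, pf_avoids_011 hF, pf_avoids_012 hF⟩
      · rintro ⟨hI, h1, h2⟩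
        exact ⟨hI, pf_of_avoids hI h1 h2⟩
    rw [hconv (FS (m+1)) hiff, cardFS]
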